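/- Let d ≥ 1, let C be a real symmetric positive-definite d×d matrix, and let μ₀ be the centered Gaussian probability measure on ℝ^d with covariance C (density proportional to exp(−x·(2C)^{-1}x)). Let σ² be a symmetric positive-semidefinite d×d matrix, let V : ℝ^d → ℝ be smooth, let f : ℝ^d → ℝ be smooth and compactly supported, and set g = e^{−V/2} f. Then ∫ ∇f · σ² ∇f e^{−V} dμ₀ = ∫ ∇g · σ² ∇g dμ₀ + ∫ g² U dμ₀, where U(x) = (1/4) ∇V(x) · σ² ∇V(x) + (1/2) [ −∇·(σ² ∇V)(x) + (σ² C^{-1} x) · ∇V(x) ]. -/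

import Mathlib

open Real MeasureTheory Matrix

/-- The gradient of `f : ℝ^d → ℝ`, as the vector of partial derivatives. -/
noncomputable def grad {d : ℕ} (f : (Fin d → ℝ) → ℝ) (x : Fin d → ℝ) : Fin d → ℝ :=
  fun i => fderiv ℝ f x (Pi.single i 1)

/-- The divergence of a vector field on `ℝ^d`. -/
noncomputable def divergence {d : ℕ} (X : (Fin d → ℝ) → (Fin d → ℝ)) (x : Fin d → ℝ) : ℝ :=
  ∑ i, fderiv ℝ (fun y => X y i) x (Pi.single i 1)

/-- The centered Gaussian measure on `ℝ^d` with covariance matrix `Cov`,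
with density `(det (2π Cov))^(-1/2) exp(-x·(2Cov)⁻¹x)` w.r.t. Lebesgue measure. -/
noncomputable def gaussianOfCovariance (d : ℕ) (Cov : Matrix (Fin d) (Fin d) ℝ) :
    Measure (Fin d → ℝ) :=
  volume.withDensity fun x =>
    ENNReal.ofReal ((Real.sqrt ((2 * π) ^ d * Cov.det))⁻¹
      * Real.exp (-(x ⬝ᵥ Cov⁻¹.mulVec x) / 2))

section Helpers

variable {d : ℕ}

lemma grad_eq_zero_of_eventuallyEq {f : (Fin d → ℝ) → ℝ} {x : Fin d → ℝ}
    (h : f =ᶠ[nhds x] 0) : grad f x = 0 := by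
  funext i
  simp only [grad]
  rw [h.fderiv_eq]
  rw [show (0 : (Fin d → ℝ) → ℝ) = fun _ => (0:ℝ) from rfl, fderiv_fun_const]
  simp

lemma divergence_eq_zero_of_eventuallyEq {X : (Fin d → ℝ) → (Fin d → ℝ)} {x : Fin d → ℝ}
    (h0 : X =ᶠ[nhds x] 0) : divergence X x = 0 := by
  unfold divergence
  refine Finset.sum_eq_zero fun i _ => ?_
  have : fderiv ℝ (fun y => X y i) x = fderiv ℝ (fun _ : Fin d → ℝ => (0:ℝ)) x := by
    apply Filter.EventuallyEq.fderiv_eq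
    filter_upwards [h0] with y hy
    simp [hy]
  rw [this, fderiv_fun_const]
  simp

lemma grad_mul {u v : (Fin d → ℝ) → ℝ} {x : Fin d → ℝ}
    (hu : DifferentiableAt ℝ u x) (hv : DifferentiableAt ℝ v x) :
    grad (fun y => u y * v y) x = fun i => u x * grad v x i + v x * grad u x i := by
  funext i
  simp only [grad, fderiv_fun_mul hu hv]
  simp [smul_eq_mul]

lemma grad_exp {w : (Fin d → ℝ) → ℝ} {x : Fin d → ℝ} (hw : DifferentiableAt ℝ w x) :
    grad (fun y => Real.exp (w y)) x = fun i => Real.exp (w x) * grad w x i := by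
  funext i
  have h := (hw.hasFDerivAt).exp
  simp only [grad, h.fderiv]
  simp [smul_eq_mul]

lemma grad_const_mul {u : (Fin d → ℝ) → ℝ} {x : Fin d → ℝ} (c : ℝ)
    (hu : DifferentiableAt ℝ u x) :
    grad (fun y => c * u y) x = fun i => c * grad u x i := by
  funext i
  have h := (hu.hasFDerivAt).const_mul c
  simp only [grad, h.fderiv]
  simp [smul_eq_mul]

lemma hasFDerivAt_quadratic (A : Matrix (Fin d) (Fin d) ℝ) (x : Fin d → ℝ) :
    HasFDerivAt (fun y : Fin d → ℝ => y ⬝ᵥ A.mulVec y)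
      (∑ i, ∑ j, A i j • ((x i • (ContinuousLinearMap.proj j :
          (Fin d → ℝ) →L[ℝ] ℝ)) + (x j • (ContinuousLinearMap.proj i :
          (Fin d → ℝ) →L[ℝ] ℝ)))) x := by
  have h : (fun y : Fin d → ℝ => y ⬝ᵥ A.mulVec y)
      = fun y => ∑ i, ∑ j, A i j * (y i * y j) := by
    funext y
    simp only [dotProduct, Matrix.mulVec, Finset.mul_sum]
    refine Finset.sum_congr rfl fun i _ => Finset.sum_congr rfl fun j _ => by ring
  rw [h]
  apply HasFDerivAt.fun_sum
  intro i _
  apply HasFDerivAt.fun_sum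
  intro j _
  have hi : HasFDerivAt (fun y : Fin d → ℝ => y i)
      (ContinuousLinearMap.proj i : (Fin d → ℝ) →L[ℝ] ℝ) x :=
    (ContinuousLinearMap.proj (R := ℝ) (φ := fun _ : Fin d => ℝ) i).hasFDerivAt
  have hj : HasFDerivAt (fun y : Fin d → ℝ => y j)
      (ContinuousLinearMap.proj j : (Fin d → ℝ) →L[ℝ] ℝ) x :=
    (ContinuousLinearMap.proj (R := ℝ) (φ := fun _ : Fin d => ℝ) j).hasFDerivAt
  exact (hi.mul hj).const_mul (A i j)

lemma grad_quadratic {A : Matrix (Fin d) (Fin d) ℝ} (hA : A.IsSymm) (x : Fin d → ℝ) :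
    grad (fun y : Fin d → ℝ => y ⬝ᵥ A.mulVec y) x = fun k => 2 * A.mulVec x k := by
  funext k
  have h := hasFDerivAt_quadratic A x
  simp only [grad, h.fderiv]
  simp only [ContinuousLinearMap.sum_apply, ContinuousLinearMap.smul_apply,
    ContinuousLinearMap.add_apply, ContinuousLinearMap.proj_apply, Pi.single_apply,
    smul_eq_mul]
  have step : ∀ i j : Fin d,
      A i j * ((x i * if j = k then (1:ℝ) else 0) + x j * if i = k then (1:ℝ) else 0)
      = (if j = k then A i j * x i else 0) + (if i = k then A i j * x j else 0) := by
    intro i j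
    by_cases h1 : j = k <;> by_cases h2 : i = k <;> simp [h1, h2] <;> ring
  rw [Finset.sum_congr rfl fun i _ => Finset.sum_congr rfl fun j _ => step i j]
  rw [Finset.sum_congr rfl fun i _ => Finset.sum_add_distrib, Finset.sum_add_distrib]
  have e1 : ∑ i, ∑ j, (if j = k then A i j * x i else 0) = ∑ i, A i k * x i := by
    refine Finset.sum_congr rfl fun i _ => ?_
    simp
  have e2 : ∑ i, ∑ j, (if i = k then A i j * x j else 0) = ∑ j, A k j * x j := by
    rw [Finset.sum_congr rfl (fun i _ => by by_cases h : i = k <;> simp [h] :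
      ∀ i ∈ Finset.univ, ∑ j, (if i = k then A i j * x j else 0)
        = if i = k then ∑ j, A i j * x j else 0)]
    simp
  rw [e1, e2]
  have e3 : ∀ i, A i k = A k i := fun i => hA.apply k i
  rw [Finset.sum_congr rfl fun i _ => by rw [e3 i]]
  simp [Matrix.mulVec, dotProduct, two_mul]

lemma divergence_smul_vec {φ : (Fin d → ℝ) → ℝ} {Y : (Fin d → ℝ) → (Fin d → ℝ)}
    {x : Fin d → ℝ} (hφ : DifferentiableAt ℝ φ x)
    (hY : ∀ i, DifferentiableAt ℝ (fun y => Y y i) x) :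
    divergence (fun y => φ y • Y y) x = grad φ x ⬝ᵥ Y x + φ x * divergence Y x := by
  unfold divergence
  have key : ∀ i, fderiv ℝ (fun y => (φ y • Y y) i) x (Pi.single i 1)
      = grad φ x i * Y x i + φ x * fderiv ℝ (fun y => Y y i) x (Pi.single i 1) := by
    intro i
    have h0 : (fun y => (φ y • Y y) i) = fun y => φ y * Y y i := rfl
    rw [h0, fderiv_fun_mul hφ (hY i)]
    simp only [ContinuousLinearMap.add_apply, ContinuousLinearMap.smul_apply, smul_eq_mul, grad]
    ring
  rw [Finset.sum_congr rfl fun i _ => key i, Finset.sum_add_distrib, ← Finset.mul_sum]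
  rfl

lemma contDiff_grad_apply {f : (Fin d → ℝ) → ℝ} (hf : ContDiff ℝ (⊤ : ℕ∞) f) (i : Fin d) :
    ContDiff ℝ (⊤ : ℕ∞) fun y => grad f y i :=
  (hf.fderiv_right (m := (⊤ : ℕ∞)) (by simp)).clm_apply contDiff_const

lemma contDiff_quadratic (A : Matrix (Fin d) (Fin d) ℝ) :
    ContDiff ℝ (⊤ : ℕ∞) fun y : Fin d → ℝ => y ⬝ᵥ A.mulVec y := by
  have h : (fun y : Fin d → ℝ => y ⬝ᵥ A.mulVec y)
      = fun y => ∑ i, ∑ j, A i j * (y i * y j) := by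
    funext y
    simp only [dotProduct, Matrix.mulVec, Finset.mul_sum]
    refine Finset.sum_congr rfl fun i _ => Finset.sum_congr rfl fun j _ => by ring
  rw [h]
  apply ContDiff.sum; intro i _
  apply ContDiff.sum; intro j _
  exact contDiff_const.mul (((ContinuousLinearMap.proj (R := ℝ) (φ := fun _ : Fin d => ℝ)
    i).contDiff).mul ((ContinuousLinearMap.proj (R := ℝ) (φ := fun _ : Fin d => ℝ) j).contDiff))

lemma divergence_eq_sum_fderiv {X : (Fin d → ℝ) → (Fin d → ℝ)}
    (hdiff : Differentiable ℝ X) (x : Fin d → ℝ) :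
    divergence X x = ∑ i, fderiv ℝ X x (Pi.single i 1) i := by
  refine Finset.sum_congr rfl fun i _ => ?_
  have h1 : fderiv ℝ (fun y => X y i) x
      = (ContinuousLinearMap.proj (R := ℝ) (φ := fun _ : Fin d => ℝ) i).comp
        (fderiv ℝ X x) :=
    (((ContinuousLinearMap.proj (R := ℝ) (φ := fun _ : Fin d => ℝ)
      i).hasFDerivAt).comp x (hdiff x).hasFDerivAt).fderiv
  rw [h1]; rfl

lemma continuous_divergence {X : (Fin d → ℝ) → (Fin d → ℝ)} (hX : ContDiff ℝ (⊤ : ℕ∞) X) :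
    Continuous (divergence X) := by
  have hsumcont : Continuous fun x => ∑ i, fderiv ℝ X x (Pi.single i 1) i := by
    apply continuous_finset_sum
    intro i _
    have hc : Continuous (fderiv ℝ X) := (hX.fderiv_right (m := (⊤ : ℕ∞)) (by simp)).continuous
    exact (continuous_apply i).comp (hc.clm_apply continuous_const)
  exact hsumcont.congr fun x =>
    (divergence_eq_sum_fderiv (hX.differentiable (by simp)) x).symm

lemma continuous_dot {u w : (Fin d → ℝ) → (Fin d → ℝ)}
    (hu : ∀ i, Continuous fun y => u y i) (hw : ∀ i, Continuous fun y => w y i) :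
    Continuous fun y => u y ⬝ᵥ w y := by
  simp only [dotProduct]
  exact continuous_finset_sum _ fun i _ => (hu i).mul (hw i)

lemma continuous_mulVec_apply (M : Matrix (Fin d) (Fin d) ℝ)
    {w : (Fin d → ℝ) → (Fin d → ℝ)} (hw : ∀ i, Continuous fun y => w y i) (i : Fin d) :
    Continuous fun y => (M.mulVec (w y)) i := by
  simp only [Matrix.mulVec, dotProduct]
  exact continuous_finset_sum _ fun j _ => continuous_const.mul (hw j)

end Helpers

noncomputable def gaussDensity (d : ℕ) (Cov : Matrix (Fin d) (Fin d) ℝ) (x : Fin d → ℝ) : ℝ :=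
  (Real.sqrt ((2 * π) ^ d * Cov.det))⁻¹ * Real.exp (-(x ⬝ᵥ Cov⁻¹.mulVec x) / 2)

lemma gaussDensity_nonneg (d : ℕ) (Cov : Matrix (Fin d) (Fin d) ℝ) (x : Fin d → ℝ) :
    0 ≤ gaussDensity d Cov x := by
  unfold gaussDensity
  positivity

lemma contDiff_gaussDensity (d : ℕ) (Cov : Matrix (Fin d) (Fin d) ℝ) :
    ContDiff ℝ (⊤ : ℕ∞) (gaussDensity d Cov) := by
  unfold gaussDensity
  exact contDiff_const.mul (((contDiff_quadratic Cov⁻¹).neg.div_const 2).exp)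

lemma integral_gaussianOfCovariance {d : ℕ} (Cov : Matrix (Fin d) (Fin d) ℝ)
    (h : (Fin d → ℝ) → ℝ) :
    ∫ x, h x ∂gaussianOfCovariance d Cov = ∫ x, h x * gaussDensity d Cov x := by
  unfold gaussianOfCovariance
  have hmeas : Measurable fun x : Fin d → ℝ => (gaussDensity d Cov x).toNNReal :=
    ((contDiff_gaussDensity d Cov).continuous.measurable).real_toNNReal
  have hrw : (fun x : Fin d → ℝ => ENNReal.ofReal ((Real.sqrt ((2 * π) ^ d * Cov.det))⁻¹
      * Real.exp (-(x ⬝ᵥ Cov⁻¹.mulVec x) / 2)))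
      = fun x => ((gaussDensity d Cov x).toNNReal : ENNReal) := by
    funext x; rw [ENNReal.ofReal]; rfl
  rw [hrw, integral_withDensity_eq_integral_smul hmeas h]
  refine integral_congr_ae (Filter.Eventually.of_forall fun x => ?_)
  simp [NNReal.smul_def, Real.coe_toNNReal _ (gaussDensity_nonneg d Cov x), mul_comm]

lemma integral_divergence_zero {n : ℕ} (X : (Fin (n+1) → ℝ) → (Fin (n+1) → ℝ))
    (hX : ContDiff ℝ (⊤ : ℕ∞) X) (hXc : HasCompactSupport X) :
    ∫ x, divergence X x = 0 := by
  obtain ⟨R, hR0, hR⟩ : ∃ R : ℝ, 0 < R ∧ tsupport X ⊆ Metric.closedBall 0 R := by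
    obtain ⟨R, hR⟩ := hXc.isBounded.subset_closedBall 0
    exact ⟨max R 1, by positivity, hR.trans (Metric.closedBall_subset_closedBall (le_max_left _ _))⟩
  set a : Fin (n+1) → ℝ := fun _ => -(R+1) with ha
  set b : Fin (n+1) → ℝ := fun _ => R+1 with hb
  have hnorm : ∀ x : Fin (n+1) → ℝ, R < ‖x‖ → X x = 0 := fun x hx =>
    image_eq_zero_of_notMem_tsupport (fun hmem => absurd (hR hmem) (by
      simp [Metric.mem_closedBall, dist_zero_right, not_le, hx]))
  have hdiff : Differentiable ℝ X := hX.differentiable (by simp)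
  have hdivX : ∀ x, divergence X x = ∑ i, fderiv ℝ X x (Pi.single i 1) i :=
    divergence_eq_sum_fderiv hdiff
  have hsumcont : Continuous fun x => ∑ i, fderiv ℝ X x (Pi.single i 1) i :=
    (continuous_divergence hX).congr fun x => hdivX x
  have key := MeasureTheory.integral_divergence_of_hasFDerivAt_off_countable a b
    (by intro i; simp only [ha, hb]; linarith)
    X (fun x => fderiv ℝ X x) ∅ Set.countable_empty
    (hX.continuous.continuousOn)
    (fun x _ => (hdiff x).hasFDerivAt)
    (hsumcont.continuousOn.integrableOn_compact isCompact_Icc)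
  have hface : ∀ (i : Fin (n+1)) (c : ℝ), R < |c| →
      ∀ y : Fin n → ℝ, X (Fin.insertNth i c y) = 0 := by
    intro i c hc y
    apply hnorm
    set z : Fin (n+1) → ℝ := Fin.insertNth i c y with hzdef
    have hzi : z i = c := by simp [hzdef]
    calc R < |c| := hc
    _ = ‖z i‖ := by rw [hzi]; rfl
    _ ≤ ‖z‖ := norm_le_pi_norm z i
  have hz : ∀ x, x ∉ Set.Icc a b → divergence X x = 0 := by
    intro x hx
    apply divergence_eq_zero_of_eventuallyEq
    rw [← notMem_tsupport_iff_eventuallyEq]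
    intro hmem
    have hb' := hR hmem
    rw [Metric.mem_closedBall, dist_zero_right] at hb'
    apply hx
    have hxi : ∀ i, |x i| ≤ R := by
      intro i
      calc |x i| = ‖x i‖ := (Real.norm_eq_abs _).symm
      _ ≤ ‖x‖ := norm_le_pi_norm x i
      _ ≤ R := hb'
    constructor <;> intro i
    · simp only [ha]; linarith [(abs_le.mp (hxi i)).1]
    · simp only [hb]; linarith [(abs_le.mp (hxi i)).2]
  have h1 : ∫ x, divergence X x = ∫ x in Set.Icc a b, divergence X x :=
    (setIntegral_eq_integral_of_forall_compl_eq_zero hz).symm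
  rw [h1, setIntegral_congr_fun measurableSet_Icc (fun x _ => hdivX x), key]
  apply Finset.sum_eq_zero
  intro i _
  have hfront : ∀ y : Fin n → ℝ, X (Fin.insertNth i (b i) y) i = 0 := by
    intro y; rw [hface i (b i) (by simp only [hb]; rw [abs_of_pos] <;> linarith) y]; rfl
  have hback : ∀ y : Fin n → ℝ, X (Fin.insertNth i (a i) y) i = 0 := by
    intro y; rw [hface i (a i) (by simp only [ha]; rw [abs_of_neg] <;> linarith) y]; rfl
  simp [hfront, hback]

theorem ground_state_aux
    (n : ℕ) (d : ℕ) (hdn : d = n + 1)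
    (Cov : Matrix (Fin d) (Fin d) ℝ) (hCs : Cov.IsSymm) (hCpd : Cov.PosDef)
    (σ2 : Matrix (Fin d) (Fin d) ℝ) (hσs : σ2.IsSymm) (hσpsd : σ2.PosSemidef)
    (V f : (Fin d → ℝ) → ℝ) (hV : ContDiff ℝ (⊤ : ℕ∞) V) (hf : ContDiff ℝ (⊤ : ℕ∞) f)
    (hfc : HasCompactSupport f) :
    ∫ x, (grad f x ⬝ᵥ σ2.mulVec (grad f x)) * Real.exp (-(V x))
        ∂(gaussianOfCovariance d Cov)
      = (∫ x, grad (fun y => Real.exp (-(V y) / 2) * f y) x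
            ⬝ᵥ σ2.mulVec (grad (fun y => Real.exp (-(V y) / 2) * f y) x)
          ∂(gaussianOfCovariance d Cov))
        + ∫ x, (Real.exp (-(V x) / 2) * f x) ^ 2
            * ((1 / 4) * (grad V x ⬝ᵥ σ2.mulVec (grad V x))
              + (1 / 2) * (-(divergence (fun y => σ2.mulVec (grad V y)) x)
                + (σ2.mulVec (Cov⁻¹.mulVec x)) ⬝ᵥ grad V x))
          ∂(gaussianOfCovariance d Cov) := by
  subst hdn
  set g : (Fin (n+1) → ℝ) → ℝ := fun y => Real.exp (-(V y) / 2) * f y with hgdef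
  set ρ : (Fin (n+1) → ℝ) → ℝ := gaussDensity (n+1) Cov with hρdef
  set Y : (Fin (n+1) → ℝ) → (Fin (n+1) → ℝ) := fun y => σ2.mulVec (grad V y) with hYdef
  set φ : (Fin (n+1) → ℝ) → ℝ := fun y => f y * f y * Real.exp (-(V y)) * ρ y with hφdef
  set X : (Fin (n+1) → ℝ) → (Fin (n+1) → ℝ) := fun y => φ y • Y y with hXdef
  set U : (Fin (n+1) → ℝ) → ℝ := fun x =>
      (1 / 4) * (grad V x ⬝ᵥ σ2.mulVec (grad V x))
        + (1 / 2) * (-(divergence Y x) + (σ2.mulVec (Cov⁻¹.mulVec x)) ⬝ᵥ grad V x)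
    with hUdef
  -- basic smoothness
  have hVd : Differentiable ℝ V := hV.differentiable (by simp)
  have hfd : Differentiable ℝ f := hf.differentiable (by simp)
  have hρc : ContDiff ℝ (⊤ : ℕ∞) ρ := contDiff_gaussDensity (n+1) Cov
  have hg : ContDiff ℝ (⊤ : ℕ∞) g := ((hV.neg.div_const 2).exp).mul hf
  have hYi : ∀ i, ContDiff ℝ (⊤ : ℕ∞) fun y => Y y i := by
    intro i
    have h0 : (fun y => Y y i) = fun y => ∑ j, σ2 i j * grad V y j := by
      funext y; simp [hYdef, Matrix.mulVec, dotProduct]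
    rw [h0]
    exact ContDiff.sum fun j _ => contDiff_const.mul (contDiff_grad_apply hV j)
  have hYc : ContDiff ℝ (⊤ : ℕ∞) Y := contDiff_pi.2 hYi
  have hφc : ContDiff ℝ (⊤ : ℕ∞) φ := (((hf.mul hf).mul (hV.neg.exp)).mul hρc)
  have hXc : ContDiff ℝ (⊤ : ℕ∞) X := contDiff_pi.2 fun i => hφc.mul (hYi i)
  have hXsupp : HasCompactSupport X := HasCompactSupport.intro hfc.isCompact
    fun x hx => by
      have hfx : f x = 0 := image_eq_zero_of_notMem_tsupport hx
      simp [hXdef, hφdef, hfx]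
  -- continuity of the various integrands
  have hgradg_cont : ∀ i, Continuous fun y => grad g y i :=
    fun i => (contDiff_grad_apply hg i).continuous
  have hgradf_cont : ∀ i, Continuous fun y => grad f y i :=
    fun i => (contDiff_grad_apply hf i).continuous
  have hgradV_cont : ∀ i, Continuous fun y => grad V y i :=
    fun i => (contDiff_grad_apply hV i).continuous
  have hUcont : Continuous U := by
    apply Continuous.add
    · exact continuous_const.mul
        (continuous_dot hgradV_cont (continuous_mulVec_apply σ2 hgradV_cont))
    · apply Continuous.mul continuous_const
      apply Continuous.add
      · exact (continuous_divergence hYc).neg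
      · exact continuous_dot
          (continuous_mulVec_apply σ2
            (continuous_mulVec_apply Cov⁻¹ (fun i => continuous_apply i)))
          hgradV_cont
  -- integrability
  have hE2int : Integrable fun x => (grad g x ⬝ᵥ σ2.mulVec (grad g x)) * ρ x := by
    apply Continuous.integrable_of_hasCompactSupport
    · exact (continuous_dot hgradg_cont (continuous_mulVec_apply σ2 hgradg_cont)).mul
        hρc.continuous
    · apply HasCompactSupport.intro hfc.isCompact
      intro x hx
      have hgrad0 : grad g x = 0 := by
        apply grad_eq_zero_of_eventuallyEq
        have hf0 := notMem_tsupport_iff_eventuallyEq.mp hx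
        filter_upwards [hf0] with y hy
        simp [hgdef, hy]
      rw [hgrad0]
      simp
  have hE3int : Integrable fun x => ((g x) ^ 2 * U x) * ρ x := by
    apply Continuous.integrable_of_hasCompactSupport
    · exact ((hg.continuous.pow 2).mul hUcont).mul hρc.continuous
    · apply HasCompactSupport.intro hfc.isCompact
      intro x hx
      have hfx : f x = 0 := image_eq_zero_of_notMem_tsupport hx
      simp [hgdef, hfx]
  have hDint : Integrable fun x => divergence X x := by
    apply Continuous.integrable_of_hasCompactSupport
    · exact continuous_divergence hXc
    · apply HasCompactSupport.intro hfc.isCompact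
      intro x hx
      apply divergence_eq_zero_of_eventuallyEq
      have hf0 := notMem_tsupport_iff_eventuallyEq.mp hx
      filter_upwards [hf0] with y hy
      simp [hXdef, hφdef, hy]
  -- the pointwise identity
  have hAs : Cov⁻¹.IsSymm := by
    rw [Matrix.IsSymm, Matrix.transpose_nonsing_inv, hCs.eq]
  have hsymdot : ∀ u w : Fin (n+1) → ℝ, u ⬝ᵥ σ2.mulVec w = w ⬝ᵥ σ2.mulVec u := by
    intro u w
    rw [Matrix.dotProduct_mulVec, ← Matrix.mulVec_transpose, hσs.eq, dotProduct_comm]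
  have hpoint : ∀ x, (grad f x ⬝ᵥ σ2.mulVec (grad f x)) * Real.exp (-(V x)) * ρ x
      = (grad g x ⬝ᵥ σ2.mulVec (grad g x)) * ρ x
        + ((g x) ^ 2 * U x) * ρ x + (1 / 2) * divergence X x := by
    intro x
    have hVx : DifferentiableAt ℝ V x := hVd x
    have hfx : DifferentiableAt ℝ f x := hfd x
    have hρx : DifferentiableAt ℝ ρ x := (hρc.differentiable (by simp)) x
    have hw : DifferentiableAt ℝ (fun y => -V y / 2) x := by
      simpa only [div_eq_mul_inv] using hVx.fun_neg.mul_const (2:ℝ)⁻¹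
    have hexpw : DifferentiableAt ℝ (fun y => Real.exp (-V y / 2)) x := hw.exp
    have hnegV : DifferentiableAt ℝ (fun y => -V y) x := hVx.neg
    have hexpnegV : DifferentiableAt ℝ (fun y => Real.exp (-V y)) x := hnegV.exp
    set e := Real.exp (-V x / 2) with hedef
    have hgradw : grad (fun y => -V y / 2) x = fun i => (-(1:ℝ)/2) * grad V x i := by
      have h0 : (fun y => -V y / 2) = fun y => (-(1:ℝ)/2) * V y := by funext y; ring
      rw [h0]; exact grad_const_mul _ hVx
    have hgg : grad g x = e • grad f x + (e * f x * (-(1:ℝ)/2)) • grad V x := by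
      rw [hgdef]
      rw [grad_mul hexpw hfx]
      funext i
      rw [congrFun (grad_exp hw) i, congrFun hgradw i]
      simp only [Pi.add_apply, Pi.smul_apply, smul_eq_mul, hedef]
      ring
    -- gradient of the Gaussian density
    have hc0 : DifferentiableAt ℝ (fun y : Fin (n+1) → ℝ => y ⬝ᵥ Cov⁻¹.mulVec y) x :=
      (contDiff_quadratic Cov⁻¹).differentiable (by simp) x
    have hqd : DifferentiableAt ℝ (fun y : Fin (n+1) → ℝ => -(y ⬝ᵥ Cov⁻¹.mulVec y) / 2) x := by
      simpa only [div_eq_mul_inv] using hc0.fun_neg.mul_const (2:ℝ)⁻¹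
    have hgradq : grad (fun y : Fin (n+1) → ℝ => -(y ⬝ᵥ Cov⁻¹.mulVec y) / 2) x
        = fun i => (-(1:ℝ)/2) * (2 * Cov⁻¹.mulVec x i) := by
      have h0 : (fun y : Fin (n+1) → ℝ => -(y ⬝ᵥ Cov⁻¹.mulVec y) / 2)
          = fun y => (-(1:ℝ)/2) * (y ⬝ᵥ Cov⁻¹.mulVec y) := by funext y; ring
      rw [h0, grad_const_mul _ hc0]
      funext i
      rw [congrFun (grad_quadratic hAs x) i]
    have hgradρ : grad ρ x = fun i => -(ρ x * Cov⁻¹.mulVec x i) := by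
      have h0 : ρ = fun y : Fin (n+1) → ℝ => (Real.sqrt ((2*π)^(n+1) * Cov.det))⁻¹
          * Real.exp (-(y ⬝ᵥ Cov⁻¹.mulVec y) / 2) := rfl
      rw [h0, grad_const_mul _ hqd.exp]
      funext i
      rw [congrFun (grad_exp hqd) i, congrFun hgradq i]
      ring
    -- gradient of φ
    have hgradff : grad (fun y => f y * f y) x = fun i => 2 * (f x * grad f x i) := by
      rw [grad_mul hfx hfx]; funext i; ring
    have hgradnegV : grad (fun y => -V y) x = fun i => (-(1:ℝ)) * grad V x i := by
      have h0 : (fun y => -V y) = fun y => (-(1:ℝ)) * V y := by funext y; ring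
      rw [h0]; exact grad_const_mul _ hVx
    have hgradEv : grad (fun y => Real.exp (-V y)) x
        = fun i => -(Real.exp (-V x) * grad V x i) := by
      rw [grad_exp hnegV]
      funext i
      rw [congrFun hgradnegV i]
      ring
    have hu1 : DifferentiableAt ℝ (fun y => f y * f y) x := hfx.mul hfx
    have hu2 : DifferentiableAt ℝ (fun y => f y * f y * Real.exp (-V y)) x :=
      hu1.mul hexpnegV
    have hgradu2 : grad (fun y => f y * f y * Real.exp (-V y)) x
        = fun i => (f x * f x) * (-(Real.exp (-V x) * grad V x i))
          + Real.exp (-V x) * (2 * (f x * grad f x i)) := by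
      rw [grad_mul hu1 hexpnegV]
      funext i
      rw [congrFun hgradEv i, congrFun hgradff i]
    have hgradφ : grad φ x = (2 * (f x * Real.exp (-(V x)) * ρ x)) • grad f x
        + (-(f x * f x * Real.exp (-(V x)) * ρ x)) • grad V x
        + (-(f x * f x * Real.exp (-(V x)) * ρ x)) • Cov⁻¹.mulVec x := by
      rw [hφdef, grad_mul hu2 hρx]
      funext i
      rw [congrFun hgradρ i, congrFun hgradu2 i]
      simp only [Pi.add_apply, Pi.smul_apply, smul_eq_mul]
      ring
    have hdivX : divergence X x = grad φ x ⬝ᵥ Y x + φ x * divergence Y x :=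
      divergence_smul_vec ((hφc.differentiable (by simp)) x)
        (fun i => ((hYi i).differentiable (by simp)) x)
    have hgx : g x = e * f x := by rw [hgdef]
    have hEv : Real.exp (-(V x)) = e * e := by
      rw [hedef, ← Real.exp_add]; congr 1; ring
    have hms : σ2.mulVec (Cov⁻¹.mulVec x) ⬝ᵥ grad V x
        = Cov⁻¹.mulVec x ⬝ᵥ σ2.mulVec (grad V x) := by
      rw [dotProduct_comm]; exact hsymdot _ _
    rw [hdivX, hgg, hgx, hgradφ]
    simp only [hUdef, hYdef, hφdef]
    rw [hms]
    simp only [add_dotProduct, smul_dotProduct, dotProduct_add,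
      dotProduct_smul, Matrix.mulVec_add, Matrix.mulVec_smul, smul_eq_mul]
    rw [hsymdot (grad V x) (grad f x)]
    rw [hEv]
    ring
  -- assembling
  rw [integral_gaussianOfCovariance, integral_gaussianOfCovariance,
    integral_gaussianOfCovariance]
  have hdiv0 : ∫ x, divergence X x = 0 := integral_divergence_zero X hXc hXsupp
  calc ∫ x, (grad f x ⬝ᵥ σ2.mulVec (grad f x)) * Real.exp (-(V x)) * ρ x
      = ∫ x, ((grad g x ⬝ᵥ σ2.mulVec (grad g x)) * ρ x
          + ((g x) ^ 2 * U x) * ρ x + (1 / 2) * divergence X x) := by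
        exact integral_congr_ae (Filter.Eventually.of_forall fun x => hpoint x)
    _ = (∫ x, ((grad g x ⬝ᵥ σ2.mulVec (grad g x)) * ρ x + ((g x) ^ 2 * U x) * ρ x))
          + (1 / 2) * ∫ x, divergence X x := by
        rw [← MeasureTheory.integral_const_mul]
        exact integral_add (hE2int.add hE3int) (hDint.const_mul _)
    _ = (∫ x, (grad g x ⬝ᵥ σ2.mulVec (grad g x)) * ρ x)
          + (∫ x, ((g x) ^ 2 * U x) * ρ x) + (1 / 2) * ∫ x, divergence X x := by
        rw [integral_add hE2int hE3int]
    _ = (∫ x, (grad g x ⬝ᵥ σ2.mulVec (grad g x)) * ρ x)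
          + ∫ x, ((g x) ^ 2 * U x) * ρ x := by
        rw [hdiv0]; ring

theorem ground_state_transformation
    (d : ℕ) (hd : 1 ≤ d)
    (Cov : Matrix (Fin d) (Fin d) ℝ) (hCs : Cov.IsSymm) (hCpd : Cov.PosDef)
    (σ2 : Matrix (Fin d) (Fin d) ℝ) (hσs : σ2.IsSymm) (hσpsd : σ2.PosSemidef)
    (V f : (Fin d → ℝ) → ℝ) (hV : ContDiff ℝ (⊤ : ℕ∞) V) (hf : ContDiff ℝ (⊤ : ℕ∞) f)
    (hfc : HasCompactSupport f) :
    ∫ x, (grad f x ⬝ᵥ σ2.mulVec (grad f x)) * Real.exp (-(V x))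
        ∂(gaussianOfCovariance d Cov)
      = (∫ x, grad (fun y => Real.exp (-(V y) / 2) * f y) x
            ⬝ᵥ σ2.mulVec (grad (fun y => Real.exp (-(V y) / 2) * f y) x)
          ∂(gaussianOfCovariance d Cov))
        + ∫ x, (Real.exp (-(V x) / 2) * f x) ^ 2
            * ((1 / 4) * (grad V x ⬝ᵥ σ2.mulVec (grad V x))
              + (1 / 2) * (-(divergence (fun y => σ2.mulVec (grad V y)) x)
                + (σ2.mulVec (Cov⁻¹.mulVec x)) ⬝ᵥ grad V x))
          ∂(gaussianOfCovariance d Cov) :=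
  ground_state_aux (d - 1) d (Nat.succ_pred_eq_of_pos hd).symm Cov hCs hCpd σ2 hσs hσpsd
    V f hV hf hfc
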